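/- arXiv:1604.08542 — 2 statements merged into one kernel-verified Lean document; each statement's English description precedes it below -/
import Mathlib

section
/- Let u₁, u₂ : ℕ → ℝ with ‖u₁‖_L ≥ L^{γ₁} and ‖u₂‖_L ≤ L^{γ₂} for all large L, with γ₂ ≥ γ₁ > 0, and let w : ℕ → ℝ satisfy |w(n)| ≤ C(1+n)^{-γ} with γ > γ₂ − γ₁. Then ‖w·u₂‖_L / ‖u₁‖_L → 0 as L → ∞. -/
/-!
Let `S n = ∑_{k<n} u₂(k+1)²`, so that `S n ≤ n^{2γ₂}` eventually. Abel summation against the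
decreasing weights `(k+1)^{-s}` bounds `∑_{k<L} (k+1)^{-s} u₂(k+1)²` by `O(L^{2γ₂-s})`: the weight
differences are at most `s (k+1)^{-s-1}`, and `∑_{k<L} (k+1)^{e-1} = O(L^e)` for `e > 0`, both
consequences of `1 + r log y ≤ y^r`. Since `w(n)² ≤ C² n^{-s}` for `s ≤ 2γ`, choosing
`2γ₂ - 2γ₁ < s` makes `‖w u₂‖_L² = o(L^{2γ₁})`, while `‖u₁‖_L² ≥ L^{2γ₁}`.
-/

/-- Truncated ℓ² norm: `(∑_{n=1}^{L} |ψ(n)|²)^{1/2}`. -/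
noncomputable def trnorm (ψ : ℕ → ℝ) (L : ℕ) : ℝ :=
  Real.sqrt (∑ n ∈ Finset.Icc 1 L, (ψ n) ^ 2)

open Real Finset Filter Asymptotics

lemma one_add_mul_log_le_rpow {y : ℝ} (hy : 0 < y) (r : ℝ) : 1 + r * log y ≤ y ^ r := by
  rw [rpow_def_of_pos hy, mul_comm]
  linarith [add_one_le_exp (log y * r)]

lemma rpow_neg_sub_rpow_neg_le {x s : ℝ} (hx : 0 < x) (hs : 0 ≤ s) :
    x ^ (-s) - (x + 1) ^ (-s) ≤ s * x ^ (-s - 1) := by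
  have hy : 0 < 1 + x⁻¹ := by positivity
  have hsplit : (x + 1) ^ (-s) = x ^ (-s) * (1 + x⁻¹) ^ (-s) := by
    rw [← mul_rpow hx.le hy.le]; congr 1; field_simp
  have hlog : log (1 + x⁻¹) ≤ x⁻¹ := by linarith [log_le_sub_one_of_pos hy]
  have hbern : 1 - s * x⁻¹ ≤ (1 + x⁻¹) ^ (-s) := by
    nlinarith [one_add_mul_log_le_rpow hy (-s)]
  rw [rpow_sub_one hx.ne', hsplit, div_eq_mul_inv]
  nlinarith [rpow_nonneg hx.le (-s)]

lemma rpow_sub_one_le_two_div_mul_sub {x e : ℝ} (hx : 1 ≤ x) (he : 0 < e) :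
    x ^ (e - 1) ≤ 2 / e * ((x + 1) ^ e - x ^ e) := by
  have hx0 : 0 < x := by linarith
  have hy : 0 < 1 + x⁻¹ := by positivity
  have hsplit : (x + 1) ^ e = x ^ e * (1 + x⁻¹) ^ e := by
    rw [← mul_rpow hx0.le hy.le]; congr 1; field_simp
  have hlog : (x + 1)⁻¹ ≤ log (1 + x⁻¹) := by
    have h := one_sub_inv_le_log_of_pos hy
    have : 1 - (1 + x⁻¹)⁻¹ = (x + 1)⁻¹ := by field_simp; ring
    linarith
  have hbern : 1 + e * (x + 1)⁻¹ ≤ (1 + x⁻¹) ^ e := by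
    nlinarith [one_add_mul_log_le_rpow hy e]
  have hxe := rpow_pos_of_pos hx0 e
  have hgrowth : e * (x ^ e * (x + 1)⁻¹) ≤ (x + 1) ^ e - x ^ e := by
    rw [hsplit]; nlinarith
  have hhalf : x ^ (e - 1) ≤ 2 * (x ^ e * (x + 1)⁻¹) := by
    rw [rpow_sub_one hx0.ne', div_le_iff₀ hx0]
    field_simp
    nlinarith
  calc x ^ (e - 1) ≤ 2 * (x ^ e * (x + 1)⁻¹) := hhalf
    _ = 2 / e * (e * (x ^ e * (x + 1)⁻¹)) := by field_simp
    _ ≤ 2 / e * ((x + 1) ^ e - x ^ e) := by gcongr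

lemma sum_range_rpow_sub_one_le {e : ℝ} (he : 0 < e) (L : ℕ) :
    ∑ k ∈ range L, ((k : ℝ) + 1) ^ (e - 1) ≤ 2 / e * ((L : ℝ) + 1) ^ e := by
  calc ∑ k ∈ range L, ((k : ℝ) + 1) ^ (e - 1)
      ≤ ∑ k ∈ range L, 2 / e * ((((k + 1 : ℕ) : ℝ) + 1) ^ e - ((k : ℝ) + 1) ^ e) := by
        gcongr with k
        push_cast
        exact rpow_sub_one_le_two_div_mul_sub (by linarith [k.cast_nonneg (α := ℝ)]) he
    _ = 2 / e * (((L : ℝ) + 1) ^ e - 1) := by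
        rw [← mul_sum, sum_range_sub (fun k : ℕ => ((k : ℝ) + 1) ^ e)]
        simp
    _ ≤ 2 / e * ((L : ℝ) + 1) ^ e := by gcongr; linarith

/-- `Finset.sum_range_by_parts` with the boundary term at `L` instead of `L - 1`. -/
lemma sum_range_mul_eq_mul_sum_add_sum_sub_mul (a v : ℕ → ℝ) (L : ℕ) :
    ∑ k ∈ range L, a k * v k =
      a L * ∑ k ∈ range L, v k + ∑ k ∈ range L, (a k - a (k + 1)) * ∑ j ∈ range (k + 1), v j := by
  induction L with
  | zero => simp
  | succ L ih =>
    rw [sum_range_succ, ih, sum_range_succ (fun k => (a k - a (k + 1)) * _), sum_range_succ v]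
    ring

lemma sum_range_mul_le_of_sum_range_le {a v B : ℕ → ℝ} (ha : Antitone a) (ha₀ : ∀ k, 0 ≤ a k)
    (hB : ∀ n, ∑ k ∈ range n, v k ≤ B n) (L : ℕ) :
    ∑ k ∈ range L, a k * v k ≤ a L * B L + ∑ k ∈ range L, (a k - a (k + 1)) * B (k + 1) := by
  rw [sum_range_mul_eq_mul_sum_add_sum_sub_mul]
  gcongr with k
  · exact ha₀ L
  · exact hB L
  · exact sub_nonneg.2 (ha k.le_succ)
  · exact hB (k + 1)

lemma sum_rpow_neg_sub_mul_rpow_le {p s : ℝ} (hs : 0 ≤ s) (hsp : s < p) (L : ℕ) :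
    ∑ k ∈ range L, (((k : ℝ) + 1) ^ (-s) - (((k + 1 : ℕ) : ℝ) + 1) ^ (-s)) * ((k : ℝ) + 1) ^ p
      ≤ 2 * s / (p - s) * ((L : ℝ) + 1) ^ (p - s) := by
  calc _ ≤ ∑ k ∈ range L, s * ((k : ℝ) + 1) ^ (p - s - 1) := by
        refine sum_le_sum fun k _ => ?_
        have hk : (0 : ℝ) < k + 1 := by positivity
        have hdiff := rpow_neg_sub_rpow_neg_le hk hs
        push_cast
        calc _ ≤ s * ((k : ℝ) + 1) ^ (-s - 1) * ((k : ℝ) + 1) ^ p :=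
              mul_le_mul_of_nonneg_right hdiff (rpow_nonneg hk.le p)
          _ = s * ((k : ℝ) + 1) ^ (p - s - 1) := by
              rw [mul_assoc, ← rpow_add hk]; ring_nf
    _ = s * ∑ k ∈ range L, ((k : ℝ) + 1) ^ (p - s - 1) := by rw [mul_sum]
    _ ≤ s * (2 / (p - s) * ((L : ℝ) + 1) ^ (p - s)) := by
        gcongr; exact sum_range_rpow_sub_one_le (sub_pos.2 hsp) L
    _ = 2 * s / (p - s) * ((L : ℝ) + 1) ^ (p - s) := by ring

lemma sum_rpow_neg_mul_le {v : ℕ → ℝ} {D p s : ℝ} (hs : 0 ≤ s) (hsp : s < p) (hD : 0 ≤ D)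
    (hS : ∀ n, ∑ k ∈ range n, v k ≤ D + (n : ℝ) ^ p) (L : ℕ) :
    ∑ k ∈ range L, ((k : ℝ) + 1) ^ (-s) * v k
      ≤ 2 * D + (1 + 2 * s / (p - s)) * ((L : ℝ) + 1) ^ (p - s) := by
  set a : ℕ → ℝ := fun k => ((k : ℝ) + 1) ^ (-s)
  have ha₀ (k : ℕ) : 0 ≤ a k := rpow_nonneg (by positivity) _
  have ha₁ (k : ℕ) : a k ≤ 1 := rpow_le_one_of_one_le_of_nonpos (by simp) (by linarith)
  have ha : Antitone a := antitone_nat_of_succ_le fun k =>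
    rpow_le_rpow_of_nonpos (by positivity) (by push_cast; linarith) (by linarith)
  have hlast : a L * (D + (L : ℝ) ^ p) ≤ D + ((L : ℝ) + 1) ^ (p - s) := by
    have : a L * (L : ℝ) ^ p ≤ ((L : ℝ) + 1) ^ (p - s) :=
      calc a L * (L : ℝ) ^ p ≤ a L * ((L : ℝ) + 1) ^ p :=
            mul_le_mul_of_nonneg_left (by gcongr <;> linarith) (ha₀ L)
        _ = ((L : ℝ) + 1) ^ (p - s) := by
            rw [← rpow_add (by positivity)]; ring_nf
    nlinarith [ha₀ L, ha₁ L]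
  have hsplit : ∑ k ∈ range L, (a k - a (k + 1)) * (D + ((k + 1 : ℕ) : ℝ) ^ p)
      = D * (a 0 - a L) + ∑ k ∈ range L, (a k - a (k + 1)) * ((k : ℝ) + 1) ^ p := by
    rw [← sum_range_sub' a L, mul_sum, ← sum_add_distrib]
    refine sum_congr rfl fun k _ => ?_
    push_cast; ring
  have hfirst : D * (a 0 - a L) ≤ D := by nlinarith [ha₀ L, ha₁ 0]
  calc _ ≤ a L * (D + (L : ℝ) ^ p)
          + ∑ k ∈ range L, (a k - a (k + 1)) * (D + ((k + 1 : ℕ) : ℝ) ^ p) :=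
        sum_range_mul_le_of_sum_range_le ha ha₀ hS L
    _ ≤ (D + ((L : ℝ) + 1) ^ (p - s)) + (D + 2 * s / (p - s) * ((L : ℝ) + 1) ^ (p - s)) := by
        rw [hsplit]
        linarith [sum_rpow_neg_sub_mul_rpow_le hs hsp L]
    _ = 2 * D + (1 + 2 * s / (p - s)) * ((L : ℝ) + 1) ^ (p - s) := by ring

theorem isBigO_sum_rpow_neg_mul {v : ℕ → ℝ} {p s : ℝ} (hv : ∀ k, 0 ≤ v k) (hs : 0 ≤ s)
    (hsp : s < p) (hS : ∀ᶠ n in atTop, ∑ k ∈ range n, v k ≤ (n : ℝ) ^ p) :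
    (fun L : ℕ => ∑ k ∈ range L, ((k : ℝ) + 1) ^ (-s) * v k) =O[atTop]
      fun L : ℕ => (L : ℝ) ^ (p - s) := by
  obtain ⟨N, hN⟩ := eventually_atTop.1 hS
  set D := ∑ k ∈ range N, v k
  have hD : 0 ≤ D := sum_nonneg fun k _ => hv k
  have hS' (n : ℕ) : ∑ k ∈ range n, v k ≤ D + (n : ℝ) ^ p := by
    rcases le_total n N with hnN | hNn
    · have := sum_le_sum_of_subset_of_nonneg (range_subset_range.2 hnN) fun k _ _ => hv k
      linarith [rpow_nonneg (Nat.cast_nonneg (α := ℝ) n) p]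
    · linarith [hN n hNn]
  set K := 1 + 2 * s / (p - s)
  refine IsBigO.of_bound (2 * D + K * 2 ^ (p - s)) ?_
  filter_upwards [eventually_ge_atTop 1] with L hL
  have hL' : (1 : ℝ) ≤ L := by exact_mod_cast hL
  have hLe : 1 ≤ (L : ℝ) ^ (p - s) := one_le_rpow hL' (by linarith)
  have hshift : ((L : ℝ) + 1) ^ (p - s) ≤ 2 ^ (p - s) * (L : ℝ) ^ (p - s) := by
    rw [← mul_rpow (by norm_num) (by positivity)]
    gcongr; linarith
  have hK : 0 ≤ K := by positivity
  rw [norm_of_nonneg (sum_nonneg fun k _ => mul_nonneg (rpow_nonneg (by positivity) _) (hv k)),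
    norm_of_nonneg (by positivity)]
  calc _ ≤ 2 * D + K * ((L : ℝ) + 1) ^ (p - s) := sum_rpow_neg_mul_le hs hsp hD hS' L
    _ ≤ 2 * D * (L : ℝ) ^ (p - s) + K * (2 ^ (p - s) * (L : ℝ) ^ (p - s)) := by
        gcongr ?_ + ?_
        · nlinarith
        · exact mul_le_mul_of_nonneg_left hshift hK
    _ = (2 * D + K * 2 ^ (p - s)) * (L : ℝ) ^ (p - s) := by ring

lemma isLittleO_natCast_rpow_rpow {a b : ℝ} (hab : a < b) :
    (fun n : ℕ => (n : ℝ) ^ a) =o[atTop] fun n : ℕ => (n : ℝ) ^ b := by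
  have hlim := (tendsto_rpow_neg_atTop (sub_pos.2 hab)).comp tendsto_natCast_atTop_atTop
  refine (isLittleO_iff_tendsto' ?_).2 (hlim.congr' ?_)
  all_goals filter_upwards [eventually_gt_atTop 0] with n hn
  · intro h; exact absurd h (rpow_pos_of_pos (Nat.cast_pos.2 hn) b).ne'
  · simp only [Function.comp_apply]
    rw [← rpow_sub (Nat.cast_pos.2 hn)]; ring_nf

lemma sum_Icc_one_eq_sum_range {M : Type*} [AddCommMonoid M] (f : ℕ → M) (L : ℕ) :
    ∑ n ∈ Icc 1 L, f n = ∑ k ∈ range L, f (k + 1) := by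
  rw [← Ico_add_one_right_eq_Icc, sum_Ico_eq_sum_range]
  simp [add_comm]

lemma sq_trnorm (ψ : ℕ → ℝ) (L : ℕ) : trnorm ψ L ^ 2 = ∑ n ∈ Icc 1 L, ψ n ^ 2 :=
  sq_sqrt (sum_nonneg fun _ _ => sq_nonneg _)

lemma rpow_two_mul_le_sum_sq {ψ : ℕ → ℝ} {L : ℕ} {a : ℝ} (h : (L : ℝ) ^ a ≤ trnorm ψ L) :
    (L : ℝ) ^ (2 * a) ≤ ∑ n ∈ Icc 1 L, ψ n ^ 2 := by
  rw [← sq_trnorm, mul_comm, rpow_mul (Nat.cast_nonneg L), rpow_two]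
  exact pow_le_pow_left₀ (rpow_nonneg (Nat.cast_nonneg L) a) h 2

lemma sum_sq_le_rpow_two_mul {ψ : ℕ → ℝ} {L : ℕ} {a : ℝ} (h : trnorm ψ L ≤ (L : ℝ) ^ a) :
    ∑ n ∈ Icc 1 L, ψ n ^ 2 ≤ (L : ℝ) ^ (2 * a) := by
  rw [← sq_trnorm, mul_comm, rpow_mul (Nat.cast_nonneg L), rpow_two]
  exact pow_le_pow_left₀ (sqrt_nonneg _) h 2

lemma sq_le_mul_rpow_neg_of_abs_le {y C γ s t : ℝ} (hy : |y| ≤ C * (1 + t) ^ (-γ)) (ht : 0 < t)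
    (hs : 0 ≤ s) (hsγ : s ≤ 2 * γ) : y ^ 2 ≤ C ^ 2 * t ^ (-s) := by
  have hdecay : (1 + t) ^ (-(2 * γ)) ≤ t ^ (-s) :=
    calc (1 + t) ^ (-(2 * γ)) ≤ (1 + t) ^ (-s) :=
          rpow_le_rpow_of_exponent_le (by linarith) (by linarith)
      _ ≤ t ^ (-s) := rpow_le_rpow_of_nonpos ht (by linarith) (by linarith)
  calc y ^ 2 = |y| ^ 2 := (sq_abs y).symm
    _ ≤ (C * (1 + t) ^ (-γ)) ^ 2 := pow_le_pow_left₀ (abs_nonneg y) hy 2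
    _ = C ^ 2 * (1 + t) ^ (-(2 * γ)) := by
        rw [mul_pow, ← rpow_mul_natCast (by linarith)]; ring_nf
    _ ≤ C ^ 2 * t ^ (-s) := by gcongr

lemma isBigO_sum_sq_mul_of_abs_le {u w : ℕ → ℝ} {C γ γ₂ s : ℝ} (hs : 0 ≤ s) (hsγ : s ≤ 2 * γ)
    (hsγ₂ : s < 2 * γ₂) (hu : ∀ᶠ L in atTop, trnorm u L ≤ (L : ℝ) ^ γ₂)
    (hw : ∀ n : ℕ, |w n| ≤ C * (1 + (n : ℝ)) ^ (-γ)) :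
    (fun L : ℕ => ∑ n ∈ Icc 1 L, (w n * u n) ^ 2) =O[atTop]
      fun L : ℕ => (L : ℝ) ^ (2 * γ₂ - s) := by
  have hpartial : ∀ᶠ L in atTop, ∑ k ∈ range L, u (k + 1) ^ 2 ≤ (L : ℝ) ^ (2 * γ₂) := by
    filter_upwards [hu] with L hL
    rw [← sum_Icc_one_eq_sum_range (fun n => u n ^ 2)]
    exact sum_sq_le_rpow_two_mul hL
  refine IsBigO.trans ?_ (isBigO_sum_rpow_neg_mul (fun k => sq_nonneg _) hs hsγ₂ hpartial)
  refine IsBigO.of_bound (C ^ 2) (Eventually.of_forall fun L => ?_)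
  rw [norm_of_nonneg (sum_nonneg fun _ _ => sq_nonneg _), norm_of_nonneg (sum_nonneg fun k _ =>
    mul_nonneg (rpow_nonneg (by positivity) _) (sq_nonneg _)), sum_Icc_one_eq_sum_range, mul_sum]
  refine sum_le_sum fun k _ => ?_
  have hweight := sq_le_mul_rpow_neg_of_abs_le (hw (k + 1)) (by positivity) hs hsγ
  push_cast at hweight
  rw [mul_pow, ← mul_assoc]
  exact mul_le_mul_of_nonneg_right hweight (sq_nonneg _)

lemma tendsto_trnorm_div_trnorm_zero {ψ φ : ℕ → ℝ}
    (h : (fun L => ∑ n ∈ Icc 1 L, ψ n ^ 2) =o[atTop] fun L => ∑ n ∈ Icc 1 L, φ n ^ 2) :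
    Tendsto (fun L => trnorm ψ L / trnorm φ L) atTop (nhds 0) := by
  have hsqrt := (continuous_sqrt.tendsto 0).comp h.tendsto_div_nhds_zero
  rw [sqrt_zero] at hsqrt
  refine hsqrt.congr fun L => ?_
  rw [Function.comp_apply, sqrt_div' _ (sum_nonneg fun _ _ => sq_nonneg _)]
  rfl

theorem stmt6_general (u₁ u₂ w : ℕ → ℝ) (γ₁ γ₂ γ C : ℝ)
    (hγ₁ : 0 < γ₁) (hγ₁₂ : γ₁ ≤ γ₂) (hγ : γ₂ - γ₁ < γ)
    (hu : ∃ L₀ : ℕ, ∀ L : ℕ, L₀ ≤ L →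
      (L : ℝ) ^ γ₁ ≤ trnorm u₁ L ∧ trnorm u₂ L ≤ (L : ℝ) ^ γ₂)
    (hw : ∀ n : ℕ, |w n| ≤ C * (1 + (n : ℝ)) ^ (-γ)) :
    Filter.Tendsto (fun L : ℕ => trnorm (fun n => w n * u₂ n) L / trnorm u₁ L)
      Filter.atTop (nhds 0) := by
  obtain ⟨L₀, hL₀⟩ := hu
  have hL₀' : ∀ᶠ L in atTop, L₀ ≤ L := eventually_ge_atTop L₀
  -- any `s` with `max 0 (2γ₂ - 2γ₁) < s ≤ 2γ` and `s < 2γ₂` would do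
  set s := min (2 * γ) (2 * γ₂ - γ₁)
  have hs : 0 ≤ s := le_min (by linarith) (by linarith)
  have hsγ₂ : s < 2 * γ₂ := (min_le_right _ _).trans_lt (by linarith)
  have hexp : 2 * γ₂ - s < 2 * γ₁ := by
    linarith [show 2 * γ₂ - 2 * γ₁ < s from lt_min (by linarith) (by linarith)]
  have hnum := isBigO_sum_sq_mul_of_abs_le hs (min_le_left _ _) hsγ₂
    (hL₀'.mono fun L hL => (hL₀ L hL).2) hw
  have hden : (fun L : ℕ => (L : ℝ) ^ (2 * γ₁)) =O[atTop] fun L => ∑ n ∈ Icc 1 L, u₁ n ^ 2 := by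
    refine IsBigO.of_bound 1 ?_
    filter_upwards [hL₀'] with L hL
    rw [one_mul, norm_of_nonneg (by positivity), norm_of_nonneg (sum_nonneg fun _ _ => sq_nonneg _)]
    exact rpow_two_mul_le_sum_sq (hL₀ L hL).1
  exact tendsto_trnorm_div_trnorm_zero
    (hnum.trans_isLittleO ((isLittleO_natCast_rpow_rpow hexp).trans_isBigO hden))

theorem stmt6 (u₁ u₂ w : ℕ → ℝ) (γ₁ γ₂ γ C : ℝ)
    (hγ₁ : 0 < γ₁) (hγ₁₂ : γ₁ ≤ γ₂) (hγ : γ₂ - γ₁ < γ) (hC : 0 < C)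
    (hu : ∃ L₀ : ℕ, ∀ L : ℕ, L₀ ≤ L →
      (L : ℝ) ^ γ₁ ≤ trnorm u₁ L ∧ trnorm u₂ L ≤ (L : ℝ) ^ γ₂)
    (hw : ∀ n : ℕ, |w n| ≤ C * (1 + (n : ℝ)) ^ (-γ)) :
    Filter.Tendsto (fun L : ℕ => trnorm (fun n => w n * u₂ n) L / trnorm u₁ L)
      Filter.atTop (nhds 0) :=
  stmt6_general u₁ u₂ w γ₁ γ₂ γ C hγ₁ hγ₁₂ hγ hu hw
end

section
/- Let u₁, u₂ : ℕ → ℝ satisfy the power-law bounds C₁L^{γ₁} ≤ ‖u_i‖_L ≤ C₂L^{γ₂} for i = 1,2 and all large L, with 0 < γ₁ ≤ γ₂ and C₁, C₂ > 0. Let P : ℕ → ℝ satisfy |P(n)| ≤ C₃(1+n)^{-p} with p > 3γ₂ − γ₁, and fix γ with γ₂ − γ₁ < γ < p − 2γ₂. Then each of the series Σ_n |P(n)u₁(n)u₂(n)|, Σ_n |P(n)| |u₂(n)|², and Σ_n (1+n)^γ |P(n)| |u₁(n)|² converges. -/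
open Finset Filter

/-! Each series is dominated by `∑ (1 + n)^(-a) ψ(n)` with `ψ ≥ 0` whose partial sums over
`[1, L]` grow at most like `L^(2γ₂)` (by Cauchy–Schwarz for the mixed series `ψ = |u₁| |u₂|`),
where `a = p` or `a = p - γ` exceeds `2γ₂`. Summation by parts against the decreasing weight
`(1 + n)^(-a)`, whose increments are `O((1 + n)^(-a-1))`, turns the partial-sum bound into
convergence (the discrete Kiselev–Last–Simon lemma). -/

theorem rpow_neg_sub_rpow_neg_add_one_le {a x : ℝ} (ha : 0 ≤ a) (hx : 0 < x) :
    x ^ (-a) - (x + 1) ^ (-a) ≤ a * x ^ (-a - 1) := by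
  have hcont : ContinuousOn (fun t : ℝ => t ^ (-a)) (Set.Ici x) :=
    fun t ht =>
      (Real.continuousAt_rpow_const _ _ (Or.inl (hx.trans_le ht).ne')).continuousWithinAt
  have hdiff : DifferentiableOn ℝ (fun t : ℝ => t ^ (-a)) (interior (Set.Ici x)) := by
    rw [interior_Ici]
    exact fun t ht =>
      (Real.differentiableAt_rpow_const_of_ne _ (hx.trans ht).ne').differentiableWithinAt
  have hderiv : ∀ t ∈ interior (Set.Ici x),
      -a * x ^ (-a - 1) ≤ deriv (fun t : ℝ => t ^ (-a)) t := by
    rw [interior_Ici]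
    intro t ht
    rw [Real.deriv_rpow_const, neg_mul, neg_mul, neg_le_neg_iff]
    exact mul_le_mul_of_nonneg_left (Real.rpow_le_rpow_of_nonpos hx (le_of_lt ht) (by linarith)) ha
  have hmvt := (convex_Ici x).mul_sub_le_image_sub_of_le_deriv hcont hdiff hderiv
    x Set.self_mem_Ici (x + 1) (by simp) (by linarith)
  simp only [add_sub_cancel_left, mul_one] at hmvt
  linarith

theorem sum_range_mul_eq_by_parts {R : Type*} [CommRing R] (f ψ : ℕ → R) (N : ℕ) :
    ∑ i ∈ range N, f i * ψ i =
      f N * ∑ i ∈ range N, ψ i + ∑ i ∈ range N, (f i - f (i + 1)) * ∑ j ∈ range (i + 1), ψ j := by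
  induction N with
  | zero => simp
  | succ N ih =>
    rw [sum_range_succ, ih, sum_range_succ (fun i => (f i - f (i + 1)) * _), sum_range_succ ψ N]
    ring

theorem summable_one_add_rpow_neg_mul_of_sum_range_le {ψ : ℕ → ℝ} {a b C : ℝ}
    (hψ : ∀ n, 0 ≤ ψ n) (hb : 0 ≤ b) (hab : b < a)
    (hS : ∀ L : ℕ, ∑ n ∈ range L, ψ n ≤ C * (L : ℝ) ^ b) :
    Summable fun n : ℕ => (1 + (n : ℝ)) ^ (-a) * ψ n := by
  set f : ℕ → ℝ := fun n => (1 + (n : ℝ)) ^ (-a) with hf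
  have ha : 0 ≤ a := by linarith
  have hC : 0 ≤ C := by simpa using (hψ 0).trans (by simpa using hS 1)
  have hG : ∀ L : ℕ, 0 ≤ ∑ n ∈ range L, ψ n := fun L => sum_nonneg fun n _ => hψ n
  have hlast : ∀ N : ℕ, f N * ∑ n ∈ range N, ψ n ≤ C := fun N =>
    calc f N * ∑ n ∈ range N, ψ n ≤ f N * (C * (1 + (N : ℝ)) ^ b) := by
          gcongr
          exact (hS N).trans (by gcongr; linarith)
      _ = C * (1 + (N : ℝ)) ^ (b - a) := by
          rw [hf, sub_eq_add_neg, Real.rpow_add (by positivity)]; ring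
      _ ≤ C := mul_le_of_le_one_right hC
          (Real.rpow_le_one_of_one_le_of_nonpos (by simp) (by linarith))
  have hstep : ∀ i : ℕ, (f i - f (i + 1)) * ∑ j ∈ range (i + 1), ψ j ≤
      a * C * (1 + (i : ℝ)) ^ (b - a - 1) := fun i =>
    calc (f i - f (i + 1)) * ∑ j ∈ range (i + 1), ψ j
        ≤ a * (1 + (i : ℝ)) ^ (-a - 1) * (C * (1 + (i : ℝ)) ^ b) := by
          have hdiff : f i - f (i + 1) ≤ a * (1 + (i : ℝ)) ^ (-a - 1) := by
            show (1 + (i : ℝ)) ^ (-a) - (1 + ((i + 1 : ℕ) : ℝ)) ^ (-a) ≤ _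
            rw [Nat.cast_succ, ← add_assoc]
            exact rpow_neg_sub_rpow_neg_add_one_le ha (by positivity)
          have hpartial : ∑ j ∈ range (i + 1), ψ j ≤ C * (1 + (i : ℝ)) ^ b :=
            (hS (i + 1)).trans_eq (by push_cast; ring_nf)
          exact mul_le_mul hdiff hpartial (hG _) (by positivity)
      _ = a * C * (1 + (i : ℝ)) ^ (b - a - 1) := by
          rw [show b - a - 1 = -a - 1 + b by ring, Real.rpow_add (by positivity)]; ring
  have hsum : Summable fun i : ℕ => (1 + (i : ℝ)) ^ (b - a - 1) := by
    simpa [add_comm] using (summable_nat_add_iff 1).2 (Real.summable_nat_rpow.2 (by linarith))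
  refine summable_of_sum_range_le (c := C + a * C * ∑' i : ℕ, (1 + (i : ℝ)) ^ (b - a - 1))
    (fun n => mul_nonneg (by positivity) (hψ n)) fun N => ?_
  rw [sum_range_mul_eq_by_parts]
  exact add_le_add (hlast N) <| (sum_le_sum fun i _ => hstep i).trans <| by
    rw [← mul_sum]
    exact mul_le_mul_of_nonneg_left
      (hsum.sum_le_tsum _ fun i _ => by positivity) (by positivity)

theorem exists_sum_range_le_mul_rpow {ψ : ℕ → ℝ} {b C : ℝ} (hψ : ∀ n, 0 ≤ ψ n) (hb : 0 ≤ b)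
    (hS : ∀ᶠ L : ℕ in atTop, ∑ n ∈ Icc 1 L, ψ n ≤ C * (L : ℝ) ^ b) :
    ∃ C' : ℝ, ∀ L : ℕ, ∑ n ∈ range L, ψ n ≤ C' * (L : ℝ) ^ b := by
  obtain ⟨L₀, hL₀⟩ := eventually_atTop.1 hS
  set K := ∑ n ∈ range L₀, ψ n
  have hK : 0 ≤ K := sum_nonneg fun n _ => hψ n
  refine ⟨max (ψ 0 + C) K, fun L => ?_⟩
  rcases L.eq_zero_or_pos with rfl | hL
  · simpa using mul_nonneg (le_max_of_le_right hK) (Real.rpow_nonneg le_rfl b)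
  have hLb : 1 ≤ (L : ℝ) ^ b := Real.one_le_rpow (by exact_mod_cast hL) hb
  have hmono : ∀ {m n : ℕ}, m ≤ n → ∑ k ∈ range m, ψ k ≤ ∑ k ∈ range n, ψ k := fun h =>
    sum_le_sum_of_subset_of_nonneg (range_subset_range.2 h) fun k _ _ => hψ k
  rcases le_or_gt L₀ L with hL₀L | hLL₀
  · calc ∑ n ∈ range L, ψ n ≤ ∑ n ∈ range (L + 1), ψ n := hmono L.le_succ
      _ = ψ 0 + ∑ n ∈ Icc 1 L, ψ n := by
          rw [range_eq_Ico, sum_eq_sum_Ico_succ_bot L.succ_pos]; rfl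
      _ ≤ ψ 0 * (L : ℝ) ^ b + C * (L : ℝ) ^ b := by
          gcongr
          · exact le_mul_of_one_le_right (hψ 0) hLb
          · exact hL₀ L hL₀L
      _ ≤ max (ψ 0 + C) K * (L : ℝ) ^ b := by
          rw [← add_mul]; gcongr; exact le_max_left _ _
  · calc ∑ n ∈ range L, ψ n ≤ K := hmono hLL₀.le
      _ ≤ max (ψ 0 + C) K := le_max_right _ _
      _ ≤ max (ψ 0 + C) K * (L : ℝ) ^ b := le_mul_of_one_le_right (le_max_of_le_right hK) hLb

theorem summable_abs_mul_of_abs_le_rpow_neg {ξ ψ : ℕ → ℝ} {a b C C' : ℝ}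
    (hξ : ∀ n, |ξ n| ≤ C * (1 + (n : ℝ)) ^ (-a)) (hψ : ∀ n, 0 ≤ ψ n) (hb : 0 ≤ b) (hab : b < a)
    (hS : ∀ᶠ L : ℕ in atTop, ∑ n ∈ Icc 1 L, ψ n ≤ C' * (L : ℝ) ^ b) :
    Summable fun n => |ξ n| * ψ n := by
  obtain ⟨C'', hC''⟩ := exists_sum_range_le_mul_rpow hψ hb hS
  refine .of_nonneg_of_le (fun n => mul_nonneg (abs_nonneg _) (hψ n)) (fun n => ?_)
    ((summable_one_add_rpow_neg_mul_of_sum_range_le hψ hb hab hC'').mul_left C)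
  rw [← mul_assoc]
  exact mul_le_mul_of_nonneg_right (hξ n) (hψ n)

theorem sum_abs_mul_abs_le_of_trnorm_le {u v : ℕ → ℝ} {L : ℕ} {C γ : ℝ}
    (hu : trnorm u L ≤ C * (L : ℝ) ^ γ) (hv : trnorm v L ≤ C * (L : ℝ) ^ γ) :
    ∑ n ∈ Icc 1 L, |u n| * |v n| ≤ C ^ 2 * (L : ℝ) ^ (2 * γ) := by
  calc ∑ n ∈ Icc 1 L, |u n| * |v n| ≤ trnorm u L * trnorm v L := by
        simpa only [trnorm, sq_abs] using Real.sum_mul_le_sqrt_mul_sqrt (Icc 1 L) (|u ·|) (|v ·|)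
    _ ≤ (C * (L : ℝ) ^ γ) * (C * (L : ℝ) ^ γ) :=
        mul_le_mul hu hv (Real.sqrt_nonneg _) ((Real.sqrt_nonneg _).trans hu)
    _ = C ^ 2 * (L : ℝ) ^ (2 * γ) := by
        rw [mul_comm 2 γ, Real.rpow_mul (Nat.cast_nonneg L), Real.rpow_two]
        ring

theorem stmt9_general (u₁ u₂ P : ℕ → ℝ) (C₁ C₂ C₃ γ₁ γ₂ p γ : ℝ)
    (hγ₁ : 0 < γ₁) (h12 : γ₁ ≤ γ₂)
    (hγl : γ₂ - γ₁ < γ) (hγu : γ < p - 2 * γ₂)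
    (hu : ∃ L₀ : ℕ, ∀ L : ℕ, L₀ ≤ L →
      (C₁ * (L : ℝ) ^ γ₁ ≤ trnorm u₁ L ∧ trnorm u₁ L ≤ C₂ * (L : ℝ) ^ γ₂) ∧
      (C₁ * (L : ℝ) ^ γ₁ ≤ trnorm u₂ L ∧ trnorm u₂ L ≤ C₂ * (L : ℝ) ^ γ₂))
    (hP : ∀ n : ℕ, |P n| ≤ C₃ * (1 + (n : ℝ)) ^ (-p)) :
    Summable (fun n : ℕ => |P n * u₁ n * u₂ n|) ∧
    Summable (fun n : ℕ => |P n| * (u₂ n) ^ 2) ∧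
    Summable (fun n : ℕ => (1 + (n : ℝ)) ^ γ * |P n| * (u₁ n) ^ 2) := by
  obtain ⟨L₀, hL₀⟩ := hu
  have hb : 0 ≤ 2 * γ₂ := by linarith
  have hbound : ∀ {u v : ℕ → ℝ}, (∀ L ≥ L₀, trnorm u L ≤ C₂ * (L : ℝ) ^ γ₂) →
      (∀ L ≥ L₀, trnorm v L ≤ C₂ * (L : ℝ) ^ γ₂) →
      ∀ᶠ L : ℕ in atTop, ∑ n ∈ Icc 1 L, |u n| * |v n| ≤ C₂ ^ 2 * (L : ℝ) ^ (2 * γ₂) :=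
    fun hu_le hv_le => eventually_atTop.2
      ⟨L₀, fun L hL => sum_abs_mul_abs_le_of_trnorm_le (hu_le L hL) (hv_le L hL)⟩
  have hu₁ : ∀ L ≥ L₀, trnorm u₁ L ≤ C₂ * (L : ℝ) ^ γ₂ := fun L hL => (hL₀ L hL).1.2
  have hu₂ : ∀ L ≥ L₀, trnorm u₂ L ≤ C₂ * (L : ℝ) ^ γ₂ := fun L hL => (hL₀ L hL).2.2
  have hPγ : ∀ n : ℕ, |(1 + (n : ℝ)) ^ γ * P n| ≤ C₃ * (1 + (n : ℝ)) ^ (-(p - γ)) := fun n => by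
    rw [abs_mul, abs_of_nonneg (by positivity), neg_sub, sub_eq_add_neg,
      Real.rpow_add (by positivity)]
    nlinarith [hP n, Real.rpow_pos_of_pos (by positivity : (0 : ℝ) < 1 + n) γ]
  refine ⟨?_, ?_, ?_⟩
  · simpa only [abs_mul, mul_assoc] using
      summable_abs_mul_of_abs_le_rpow_neg hP (fun n => by positivity) hb (by linarith)
        (hbound hu₁ hu₂)
  · simpa only [abs_mul_abs_self, sq] using
      summable_abs_mul_of_abs_le_rpow_neg hP (fun n => by positivity) hb (by linarith)
        (hbound hu₂ hu₂)
  · refine (summable_abs_mul_of_abs_le_rpow_neg hPγ (fun n => by positivity) hb (by linarith)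
      (hbound hu₁ hu₁)).congr fun n => ?_
    rw [abs_mul, abs_mul_abs_self, abs_of_nonneg (by positivity), sq]

theorem stmt9 (u₁ u₂ P : ℕ → ℝ) (C₁ C₂ C₃ γ₁ γ₂ p γ : ℝ)
    (hC₁ : 0 < C₁) (hC₂ : 0 < C₂) (hC₃ : 0 < C₃)
    (hγ₁ : 0 < γ₁) (h12 : γ₁ ≤ γ₂) (hp : 3 * γ₂ - γ₁ < p)
    (hγl : γ₂ - γ₁ < γ) (hγu : γ < p - 2 * γ₂)
    (hu : ∃ L₀ : ℕ, ∀ L : ℕ, L₀ ≤ L →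
      (C₁ * (L : ℝ) ^ γ₁ ≤ trnorm u₁ L ∧ trnorm u₁ L ≤ C₂ * (L : ℝ) ^ γ₂) ∧
      (C₁ * (L : ℝ) ^ γ₁ ≤ trnorm u₂ L ∧ trnorm u₂ L ≤ C₂ * (L : ℝ) ^ γ₂))
    (hP : ∀ n : ℕ, |P n| ≤ C₃ * (1 + (n : ℝ)) ^ (-p)) :
    Summable (fun n : ℕ => |P n * u₁ n * u₂ n|) ∧
    Summable (fun n : ℕ => |P n| * (u₂ n) ^ 2) ∧
    Summable (fun n : ℕ => (1 + (n : ℝ)) ^ γ * |P n| * (u₁ n) ^ 2) :=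
  stmt9_general u₁ u₂ P C₁ C₂ C₃ γ₁ γ₂ p γ hγ₁ h12 hγl hγu hu hP
end
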